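/- arXiv:1302.0780 — 2 statements merged into one kernel-verified Lean document; each statement's English description precedes it below -/
import Mathlib

section
/- Let Σ : ℝ^d → ℝ be concave and differentiable with gradient s = ∇Σ, and let M ∈ ℝ^{p×d}. Define the controller vector field φ(η, v) = s(η) + Mᵀv with output ψ(η) = Mη. Then for all η, η' ∈ ℝ^d and all inputs v, v' ∈ ℝ^p, the storage function W(η, η') = ½‖η − η'‖² satisfies ⟨η − η', φ(η, v) − φ(η', v')⟩ ≤ ⟨Mη − Mη', v − v'⟩. In other words, the internal-model controller η̇ = s(η) + Mᵀv, λ = Mη is incrementally passive. -/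
open scoped RealInnerProductSpace

/-!
The gradient of a concave function is monotone decreasing: restricted to the segment from `η'`
to `η`, `Σ` is a concave function of one variable whose derivative `⟪∇Σ, η - η'⟫` decreases, so
`⟪η - η', s η - s η'⟫ ≤ 0`. The input contributes `⟪η - η', Mᵀ (v - v')⟫ = ⟪M η - M η', v - v'⟫`.
-/

section Gradient

variable {E : Type*} [NormedAddCommGroup E] [InnerProductSpace ℝ E] [CompleteSpace E]

theorem HasGradientAt.hasDerivAt_comp_lineMap {f : E → ℝ} {g a b : E} {t : ℝ}
    (hf : HasGradientAt f g (AffineMap.lineMap a b t)) :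
    HasDerivAt (f ∘ AffineMap.lineMap a b) ⟪g, b - a⟫ t := by
  simpa using hf.hasFDerivAt.comp_hasDerivAt t AffineMap.hasDerivAt_lineMap

theorem ConcaveOn.inner_sub_gradient_nonpos {f : E → ℝ} {D : Set E} (hf : ConcaveOn ℝ D f)
    {x y gx gy : E} (hx : x ∈ D) (hy : y ∈ D)
    (hgx : HasGradientAt f gx x) (hgy : HasGradientAt f gy y) :
    ⟪x - y, gx - gy⟫ ≤ 0 := by
  have hline : ConcaveOn ℝ (AffineMap.lineMap y x ⁻¹' D) (f ∘ AffineMap.lineMap y x) :=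
    hf.comp_affineMap _
  have h0 : (0 : ℝ) ∈ AffineMap.lineMap y x ⁻¹' D := by simpa using hy
  have h1 : (1 : ℝ) ∈ AffineMap.lineMap y x ⁻¹' D := by simpa using hx
  have hslope_le := hline.slope_le_of_hasDerivAt h0 h1 one_pos
    (HasGradientAt.hasDerivAt_comp_lineMap (by simpa using hgy))
  have hle_slope := hline.le_slope_of_hasDerivAt h0 h1 one_pos
    (HasGradientAt.hasDerivAt_comp_lineMap (by simpa using hgx))
  rw [real_inner_comm, inner_sub_left]
  linarith

end Gradient

theorem Matrix.inner_toEuclideanLin_transpose {m n : Type*} [Fintype m] [Fintype n]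
    [DecidableEq m] [DecidableEq n] (A : Matrix m n ℝ) (x : EuclideanSpace ℝ n)
    (y : EuclideanSpace ℝ m) :
    ⟪x, A.transpose.toEuclideanLin y⟫ = ⟪A.toEuclideanLin x, y⟫ := by
  rw [← conjTranspose_eq_transpose_of_trivial, toEuclideanLin_conjTranspose_eq_adjoint,
    LinearMap.adjoint_inner_right]

/-- The internal-model controller `η̇ = s(η) + Mᵀv`, `λ = Mη`, with `s = ∇Σ`
the gradient of a concave differentiable function, is incrementally passive:
with storage `W(η,η') = ½‖η − η'‖²`, its derivative along the two vector fields,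
`⟨η − η', φ(η,v) − φ(η',v')⟩`, is bounded by `⟨Mη − Mη', v − v'⟩`. -/
theorem internal_model_controller_incrementally_passive
    (d p : ℕ)
    (Sig : EuclideanSpace ℝ (Fin d) → ℝ)
    (s : EuclideanSpace ℝ (Fin d) → EuclideanSpace ℝ (Fin d))
    (hconc : ConcaveOn ℝ Set.univ Sig)
    (hgrad : ∀ η, HasGradientAt Sig (s η) η)
    (M : Matrix (Fin p) (Fin d) ℝ) :
    ∀ (η η' : EuclideanSpace ℝ (Fin d)) (v v' : EuclideanSpace ℝ (Fin p)),
      ⟪η - η', (s η + Matrix.toEuclideanLin M.transpose v)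
          - (s η' + Matrix.toEuclideanLin M.transpose v')⟫
        ≤ ⟪Matrix.toEuclideanLin M η - Matrix.toEuclideanLin M η', v - v'⟫ := by
  intro η η' v v'
  have hmono : ⟪η - η', s η - s η'⟫ ≤ 0 :=
    hconc.inner_sub_gradient_nonpos trivial trivial (hgrad η) (hgrad η')
  calc ⟪η - η', (s η + M.transpose.toEuclideanLin v) - (s η' + M.transpose.toEuclideanLin v')⟫
      = ⟪η - η', s η - s η'⟫ + ⟪η - η', M.transpose.toEuclideanLin (v - v')⟫ := by
        rw [map_sub, add_sub_add_comm, inner_add_right]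
    _ ≤ ⟪η - η', M.transpose.toEuclideanLin (v - v')⟫ := add_le_of_nonpos_left hmono
    _ = ⟪M.toEuclideanLin η - M.toEuclideanLin η', v - v'⟫ := by
        rw [M.inner_toEuclideanLin_transpose, map_sub]
end

section
/- Let 𝐁 ∈ ℝ^{N×M} be any real matrix. Let y, y^w ∈ ℝ^N with 𝐁ᵀy^w = 0, let λ, λ^w ∈ ℝ^M, and set u = 𝐁λ, u^w = 𝐁λ^w, v = −𝐁ᵀy, ν = −𝐁ᵀy, ν^w = 0. Then (y − y^w)ᵀ(u − u^w) + (λ − λ^w)ᵀv − (ν − ν^w)ᵀv = −‖𝐁ᵀy‖². Consequently, under the interconnection u = 𝐁λ, v = −𝐁ᵀy with the extra feedback ν = −𝐁ᵀy, the sum of the incremental supply rates of plant and controllers equals minus the squared norm of the output disagreement z = 𝐁ᵀy. -/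
open scoped Matrix

/-- Central dissipation identity of the output agreement theorem: with
`u = 𝐁λ`, `u^w = 𝐁λ^w`, `v = ν = −𝐁ᵀy`, `ν^w = 0` and `𝐁ᵀy^w = 0`, the sum of
the incremental supply rates equals minus the squared norm of `z = 𝐁ᵀy`:
`(y − y^w)ᵀ(u − u^w) + (λ − λ^w)ᵀv − (ν − ν^w)ᵀv = −‖𝐁ᵀy‖²`. -/
theorem dissipation_identity
    (N M : ℕ) (B : Matrix (Fin N) (Fin M) ℝ)
    (y yw : Fin N → ℝ) (lam lamw : Fin M → ℝ)
    (hyw : B.transpose.mulVec yw = 0) :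
    (y - yw) ⬝ᵥ (B.mulVec lam - B.mulVec lamw)
        + (lam - lamw) ⬝ᵥ (-(B.transpose.mulVec y))
        - ((-(B.transpose.mulVec y)) - 0) ⬝ᵥ (-(B.transpose.mulVec y))
      = -((B.transpose.mulVec y) ⬝ᵥ (B.transpose.mulVec y)) := by
  have h1 : (y - yw) ⬝ᵥ (B.mulVec lam - B.mulVec lamw)
      = (lam - lamw) ⬝ᵥ (B.transpose.mulVec y) := by
    rw [← Matrix.mulVec_sub, Matrix.dotProduct_mulVec, ← Matrix.mulVec_transpose,
      Matrix.mulVec_sub, hyw, sub_zero, dotProduct_comm]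
  rw [h1]
  simp [dotProduct_neg, neg_dotProduct]
end
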